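/- arXiv:1703.06806 — 2 statements merged into one kernel-verified Lean document; each statement's English description precedes it below -/
import Mathlib

section
/- There exist a constant c > 0 and a real number x₀ such that for all x ≥ x₀: Σ_{p prime, x ≤ p ≤ 2x} (1/(4√p)) · Σ_{n ∈ ℕ, p−2√p ≤ n ≤ p+2√p} (Λ(n)/log n) · (φ(n)/n) ≥ c · x/(log x)², where the inner sum runs over natural numbers n ≥ 2 in the real interval [p − 2√p, p + 2√p]. -/
/-!
For a prime `q` the summand `Λ q / log q * φ q / q = 1 - 1 / q` is at least `1 / 2`, so the inner
sum at `p` is at least half the number of primes within `2 √p` of `p`. Cut `[x, 2x]` into blocks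
`⌊q / √x⌋ = const` of length `√x`; there are at most `2 √x` of them, and all primes in the block of
`p` lie in the window around `p`. By Cauchy–Schwarz, if `T` is the set of primes in `[x, 2x]`,
`∑_{p ∈ T} #(block of p) = ∑_blocks #block ^ 2 ≥ #T ^ 2 / (2 √x)`, so with `√p ≤ 2 √x` the whole
sum is at least `#T ^ 2 / (32 x)`. Finally `#T ≫ x / log x` by Chebyshev's argument: the primes in
`(n, 2n]` are the only large prime factors of `C(2n, n) ≥ 4 ^ n / n`, the primes in `(2n/3, n]` do
not divide it, and the remaining factors contribute at most `(2n) ^ √(2n) · 4 ^ (2n/3)`.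
-/

open ArithmeticFunction Finset Filter

open Asymptotics in
theorem isLittleO_sqrt_mul_log_id : (fun x => √x * Real.log x) =o[atTop] id := by
  have h : Real.log =o[atTop] fun x => x ^ (1 / 2 : ℝ) := isLittleO_log_rpow_atTop (by norm_num)
  refine ((isBigO_refl (fun x => x ^ (1 / 2 : ℝ)) atTop).mul_isLittleO h).congr' ?_ ?_
  · filter_upwards [eventually_ge_atTop 0] with x hx
    rw [Real.sqrt_eq_rpow]
  · filter_upwards [eventually_ge_atTop 0] with x hx
    rw [← Real.rpow_add' hx (by norm_num)]
    norm_num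

theorem eventually_log_add_sqrt_mul_log_le :
    ∀ᶠ x : ℝ in atTop, Real.log x + √(2 * x) * Real.log (2 * x) ≤ x / 5 := by
  have h := Real.isLittleO_log_id_atTop.add <|
    (isLittleO_sqrt_mul_log_id.comp_tendsto (tendsto_id.const_mul_atTop two_pos)).trans_isBigO
      (Asymptotics.isBigO_const_mul_self 2 id atTop)
  filter_upwards [h.def (show (0 : ℝ) < 1 / 5 by norm_num), eventually_ge_atTop 0] with x hx hx0
  simp only [Function.comp_apply, id, Real.norm_eq_abs, abs_of_nonneg hx0] at hx
  linarith [le_abs_self (Real.log x + √(2 * x) * Real.log (2 * x))]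

theorem Finset.sq_card_le_card_image_mul_sum_card_fiber {α β : Type*} [DecidableEq β]
    (s : Finset α) (g : α → β) :
    #s ^ 2 ≤ #(s.image g) * ∑ a ∈ s, #{b ∈ s | g b = g a} := by
  have hmaps : ∀ a ∈ s, g a ∈ s.image g := fun a ha => mem_image_of_mem g ha
  have hsum : ∑ a ∈ s, #{b ∈ s | g b = g a} = ∑ j ∈ s.image g, #{b ∈ s | g b = j} ^ 2 := by
    rw [← sum_fiberwise_of_maps_to hmaps]
    refine sum_congr rfl fun j _ => ?_
    rw [sum_congr rfl fun a ha => by rw [(mem_filter.1 ha).2], sum_const, smul_eq_mul, sq]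
  rw [hsum, card_eq_sum_card_fiberwise hmaps]
  exact sq_sum_le_card_mul_sum_sq

theorem abs_sub_lt_of_floor_div_eq {a b h : ℝ} (hh : 0 < h) (ha : 0 ≤ a) (hb : 0 ≤ b)
    (hab : ⌊a / h⌋₊ = ⌊b / h⌋₊) : |a - b| < h := by
  have hint : ⌊a / h⌋ = ⌊b / h⌋ := by
    rw [← Int.natCast_floor_eq_floor (by positivity), ← Int.natCast_floor_eq_floor (by positivity),
      hab]
  have := Int.abs_sub_lt_one_of_floor_eq_floor hint
  rwa [← sub_div, abs_div, abs_of_pos hh, div_lt_one hh] at this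

theorem card_image_floor_div_le {s : Finset ℕ} {a b h : ℝ} (hh : 0 < h) (ha : 0 ≤ a) (hab : a ≤ b)
    (hs : ∀ p ∈ s, a ≤ p ∧ p ≤ b) :
    (#(s.image fun p : ℕ => ⌊(p : ℝ) / h⌋₊) : ℝ) ≤ (b - a) / h + 2 := by
  have hsub : s.image (fun p : ℕ => ⌊(p : ℝ) / h⌋₊) ⊆ Icc ⌊a / h⌋₊ ⌊b / h⌋₊ := by
    intro j hj
    obtain ⟨p, hp, rfl⟩ := mem_image.1 hj
    exact mem_Icc.2 ⟨Nat.floor_le_floor (by gcongr; exact (hs p hp).1),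
      Nat.floor_le_floor (by gcongr; exact (hs p hp).2)⟩
  have hmono : ⌊a / h⌋₊ ≤ ⌊b / h⌋₊ := Nat.floor_le_floor (by gcongr)
  have hcard : #(s.image fun p : ℕ => ⌊(p : ℝ) / h⌋₊) + ⌊a / h⌋₊ ≤ ⌊b / h⌋₊ + 1 := by
    have := card_le_card hsub
    rw [Nat.card_Icc] at this
    omega
  have hb : (⌊b / h⌋₊ : ℝ) ≤ b / h := Nat.floor_le (div_nonneg (ha.trans hab) hh.le)
  have ha' : a / h < ⌊a / h⌋₊ + 1 := Nat.lt_floor_add_one _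
  have hcard' : (#(s.image fun p : ℕ => ⌊(p : ℝ) / h⌋₊) : ℝ) + ⌊a / h⌋₊ ≤ ⌊b / h⌋₊ + 1 := by
    exact_mod_cast hcard
  rw [sub_div]
  linarith

namespace Nat

theorem prod_pow_factorization_centralBinom_range_le {n : ℕ} (hn : 0 < n) :
    ∏ p ∈ range (2 * n / 3 + 1), p ^ (centralBinom n).factorization p ≤
      (2 * n) ^ Nat.sqrt (2 * n) * 4 ^ (2 * n / 3) := by
  have h2n : 0 < 2 * n := by omega
  rw [← prod_filter_of_ne (p := Nat.Prime) fun p _ h => by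
      contrapose! h; rw [factorization_eq_zero_of_not_prime _ h, pow_zero],
    ← prod_filter_mul_prod_filter_not _ (· ≤ Nat.sqrt (2 * n))]
  gcongr
  · calc _ ≤ (2 * n) ^ #{p ∈ range (2 * n / 3 + 1) | p.Prime ∧ p ≤ Nat.sqrt (2 * n)} := by
          rw [filter_filter]
          exact prod_le_pow_card _ _ _ fun p _ => pow_factorization_choose_le h2n
      _ ≤ (2 * n) ^ #(Ioc 0 (Nat.sqrt (2 * n))) := by
          refine pow_le_pow_right₀ h2n (card_le_card fun p hp => ?_)
          simp only [mem_filter] at hp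
          exact mem_Ioc.2 ⟨hp.2.1.pos, hp.2.2⟩
      _ = _ := by rw [Nat.card_Ioc, Nat.sub_zero]
  · calc _ ≤ ∏ p ∈ primesLE (2 * n / 3) with ¬p ≤ Nat.sqrt (2 * n), p := by
          refine prod_le_prod' fun p hp => ?_
          simp only [mem_filter, not_le] at hp
          exact (pow_le_pow_right₀ (hp.1.2 : p.Prime).one_lt.le
            (factorization_choose_le_one (sqrt_lt'.mp hp.2))).trans_eq (pow_one p)
      _ ≤ primorial (2 * n / 3) :=
          prod_le_prod_of_subset_of_one_le' (filter_subset _ _)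
            fun p hp _ => (mem_filter.1 hp).2.one_lt.le
      _ ≤ 4 ^ (2 * n / 3) := primorial_le_four_pow _

theorem prod_pow_factorization_centralBinom_Ico_le {n : ℕ} (hn : 2 < n) :
    ∏ p ∈ Ico (2 * n / 3 + 1) (2 * n + 1), p ^ (centralBinom n).factorization p ≤
      (2 * n) ^ #{p ∈ Ioc n (2 * n) | p.Prime} := by
  rw [← prod_filter_of_ne (p := fun p => p.Prime ∧ n < p) fun p hp h => by
    contrapose! h
    rw [mem_Ico] at hp
    by_cases hp' : p.Prime
    · rw [factorization_centralBinom_of_two_mul_self_lt_three_mul hn (h hp') (by omega), pow_zero]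
    · rw [factorization_eq_zero_of_not_prime _ hp', pow_zero]]
  calc _ ≤ (2 * n) ^ #{p ∈ Ico (2 * n / 3 + 1) (2 * n + 1) | p.Prime ∧ n < p} :=
        prod_le_pow_card _ _ _ fun p _ => pow_factorization_choose_le (by omega)
    _ ≤ _ := by
        refine pow_le_pow_right₀ (by omega) (card_le_card fun p hp => ?_)
        simp only [mem_filter, mem_Ico, mem_Ioc] at hp ⊢
        exact ⟨⟨hp.2.2, by omega⟩, hp.2.1⟩

theorem centralBinom_le_mul_pow_card_primes_Ioc {n : ℕ} (hn : 2 < n) :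
    centralBinom n ≤
      (2 * n) ^ Nat.sqrt (2 * n) * 4 ^ (2 * n / 3) * (2 * n) ^ #{p ∈ Ioc n (2 * n) | p.Prime} := by
  rw [← prod_pow_factorization_centralBinom,
    ← prod_range_mul_prod_Ico _ (succ_le_succ (div_le_self (2 * n) 3))]
  exact Nat.mul_le_mul (prod_pow_factorization_centralBinom_range_le (by omega))
    (prod_pow_factorization_centralBinom_Ico_le hn)

theorem log_four_mul_div_three_le {n : ℕ} (hn : 4 ≤ n) :
    n * Real.log 4 / 3 ≤
      Real.log n + √(2 * n) * Real.log (2 * n) +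
        #{p ∈ Ioc n (2 * n) | p.Prime} * Real.log (2 * n) := by
  have key : (4 : ℝ) ^ n ≤ n * ((2 * n) ^ Nat.sqrt (2 * n) * 4 ^ (2 * n / 3) *
      (2 * n) ^ #{p ∈ Ioc n (2 * n) | p.Prime}) := by
    exact_mod_cast (four_pow_lt_mul_centralBinom n hn).le.trans
      (Nat.mul_le_mul_left n (centralBinom_le_mul_pow_card_primes_Ioc (by omega)))
  have hlog := Real.log_le_log (by positivity) key
  rw [Real.log_mul (by positivity) (by positivity), Real.log_mul (by positivity) (by positivity),
    Real.log_mul (by positivity) (by positivity), Real.log_pow, Real.log_pow, Real.log_pow,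
    Real.log_pow] at hlog
  have hsqrt : (Nat.sqrt (2 * n) : ℝ) ≤ √(2 * n) := by
    exact_mod_cast Real.nat_sqrt_le_real_sqrt (a := 2 * n)
  have hdiv : ((2 * n / 3 : ℕ) : ℝ) ≤ 2 * n / 3 := by
    exact_mod_cast Nat.cast_div_le (m := 2 * n) (n := 3)
  have hlog2n : 0 ≤ Real.log (2 * n) := Real.log_nonneg (by norm_cast; omega)
  have hlog4 : 0 ≤ Real.log 4 := Real.log_nonneg (by norm_num)
  linarith [mul_le_mul_of_nonneg_right hsqrt hlog2n, mul_le_mul_of_nonneg_right hdiv hlog4]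

theorem eventually_div_four_le_card_primes_Ioc_mul_log :
    ∀ᶠ n : ℕ in atTop, (n : ℝ) / 4 ≤ #{p ∈ Ioc n (2 * n) | p.Prime} * Real.log (2 * n) := by
  filter_upwards [eventually_ge_atTop 4,
    tendsto_natCast_atTop_atTop.eventually eventually_log_add_sqrt_mul_log_le] with n hn hsmall
  have h4 : (1.386 : ℝ) ≤ Real.log 4 := by
    rw [show (4 : ℝ) = 2 ^ 2 by norm_num, Real.log_pow]
    linarith [Real.log_two_gt_d9]
  have hn0 : (0 : ℝ) ≤ n := n.cast_nonneg
  linarith [log_four_mul_div_three_le hn, mul_le_mul_of_nonneg_left h4 hn0]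

end Nat

noncomputable def dyadicPrimes (x : ℝ) : Finset ℕ := {p ∈ Icc ⌈x⌉₊ ⌊2 * x⌋₊ | p.Prime}

theorem mem_dyadicPrimes {x : ℝ} (hx : 0 ≤ x) {p : ℕ} :
    p ∈ dyadicPrimes x ↔ p.Prime ∧ x ≤ p ∧ p ≤ 2 * x := by
  rw [dyadicPrimes, mem_filter, mem_Icc, Nat.ceil_le, Nat.le_floor_iff (by positivity)]
  tauto

theorem card_primes_Ioc_ceil_le {x : ℝ} (hx : 0 ≤ x) :
    #{p ∈ Ioc ⌈x⌉₊ (2 * ⌈x⌉₊) | p.Prime} ≤ #(dyadicPrimes x) + 2 := by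
  have hceil : 2 * ⌈x⌉₊ ≤ ⌊2 * x⌋₊ + 2 := by
    have h1 := Nat.ceil_lt_add_one hx
    have h2 := Nat.lt_floor_add_one (2 * x)
    have : ((2 * ⌈x⌉₊ : ℕ) : ℝ) < ⌊2 * x⌋₊ + 3 := by push_cast; linarith
    have : 2 * ⌈x⌉₊ < ⌊2 * x⌋₊ + 3 := by exact_mod_cast this
    omega
  calc _ ≤ #(dyadicPrimes x ∪ Ioc ⌊2 * x⌋₊ (2 * ⌈x⌉₊)) := by
        refine card_le_card fun p hp => ?_
        simp only [mem_filter, mem_Ioc] at hp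
        rcases le_or_gt p ⌊2 * x⌋₊ with h | h
        · exact mem_union_left _ (mem_filter.2 ⟨mem_Icc.2 ⟨hp.1.1.le, h⟩, hp.2⟩)
        · exact mem_union_right _ (mem_Ioc.2 ⟨h, hp.1.2⟩)
    _ ≤ #(dyadicPrimes x) + #(Ioc ⌊2 * x⌋₊ (2 * ⌈x⌉₊)) := card_union_le _ _
    _ ≤ _ := by rw [Nat.card_Ioc]; omega

theorem eventually_div_nine_log_le_card_dyadicPrimes :
    ∀ᶠ x : ℝ in atTop, x / (9 * Real.log x) ≤ #(dyadicPrimes x) := by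
  filter_upwards [eventually_ge_atTop 4,
    tendsto_nat_ceil_atTop.eventually Nat.eventually_div_four_le_card_primes_Ioc_mul_log,
    Real.isLittleO_log_id_atTop.def (show (0 : ℝ) < 1 / 144 by norm_num)] with x hx hcheb hlog
  have hL : 0 < Real.log x := Real.log_pos (by linarith)
  have hlog : Real.log x ≤ x / 144 := by
    rw [Real.norm_eq_abs, Real.norm_eq_abs, abs_of_pos hL, id, abs_of_nonneg (by linarith)] at hlog
    linarith
  have hceil : x ≤ ⌈x⌉₊ := Nat.le_ceil x
  have hceil' : (⌈x⌉₊ : ℝ) < x + 1 := Nat.ceil_lt_add_one (by linarith)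
  have hlog2 : Real.log (2 * ⌈x⌉₊) ≤ 2 * Real.log x := by
    calc Real.log (2 * ⌈x⌉₊) ≤ Real.log (4 * x) := Real.log_le_log (by positivity) (by linarith)
      _ = Real.log 4 + Real.log x := Real.log_mul (by norm_num) (by positivity)
      _ ≤ 2 * Real.log x := by linarith [Real.log_le_log (by norm_num) hx]
  have hcard : (#{p ∈ Ioc ⌈x⌉₊ (2 * ⌈x⌉₊) | p.Prime} : ℝ) ≤ #(dyadicPrimes x) + 2 := by
    exact_mod_cast card_primes_Ioc_ceil_le (by linarith)
  have hcheb' : x / 4 ≤ (#(dyadicPrimes x) + 2) * (2 * Real.log x) := calc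
    x / 4 ≤ ⌈x⌉₊ / 4 := by linarith
    _ ≤ #{p ∈ Ioc ⌈x⌉₊ (2 * ⌈x⌉₊) | p.Prime} * Real.log (2 * ⌈x⌉₊) := by exact_mod_cast hcheb
    _ ≤ (#(dyadicPrimes x) + 2) * (2 * Real.log x) :=
        mul_le_mul hcard hlog2 (Real.log_nonneg (by linarith)) (by positivity)
  rw [div_le_iff₀ (by positivity)]
  linarith

noncomputable def vonMangoldtTotientWeight (n : ℕ) : ℝ := Λ n / Real.log n * (n.totient / n)

theorem vonMangoldtTotientWeight_nonneg (n : ℕ) : 0 ≤ vonMangoldtTotientWeight n :=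
  mul_nonneg (div_nonneg vonMangoldt_nonneg (Real.log_natCast_nonneg n)) (by positivity)

theorem Nat.Prime.vonMangoldtTotientWeight_eq {p : ℕ} (hp : p.Prime) :
    vonMangoldtTotientWeight p = 1 - 1 / p := by
  have hlog : Real.log p ≠ 0 := (Real.log_pos (by exact_mod_cast hp.one_lt)).ne'
  have hp0 : (p : ℝ) ≠ 0 := by exact_mod_cast hp.ne_zero
  rw [vonMangoldtTotientWeight, vonMangoldt_apply_prime hp, div_self hlog, one_mul,
    Nat.totient_prime hp, Nat.cast_sub hp.one_lt.le]
  field_simp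
  push_cast
  ring

theorem Nat.Prime.one_half_le_vonMangoldtTotientWeight {p : ℕ} (hp : p.Prime) :
    1 / 2 ≤ vonMangoldtTotientWeight p := by
  have : (2 : ℝ) ≤ p := by exact_mod_cast hp.two_le
  rw [hp.vonMangoldtTotientWeight_eq]
  linarith [one_div_le_one_div_of_le two_pos this]

theorem card_div_two_le_sum_vonMangoldtTotientWeight {s t : Finset ℕ} (hs : ∀ p ∈ s, p.Prime)
    (hst : s ⊆ t) : (#s : ℝ) / 2 ≤ ∑ n ∈ t, vonMangoldtTotientWeight n :=
  calc (#s : ℝ) / 2 = ∑ _p ∈ s, (1 / 2 : ℝ) := by rw [sum_const, nsmul_eq_mul]; ring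
    _ ≤ ∑ p ∈ s, vonMangoldtTotientWeight p :=
        sum_le_sum fun p hp => (hs p hp).one_half_le_vonMangoldtTotientWeight
    _ ≤ ∑ n ∈ t, vonMangoldtTotientWeight n :=
        sum_le_sum_of_subset_of_nonneg hst fun n _ _ => vonMangoldtTotientWeight_nonneg n

theorem mem_Icc_of_abs_sub_le_two_mul_sqrt {p q : ℕ} (hq : 2 ≤ q) (h : |(q : ℝ) - p| ≤ 2 * √p) :
    q ∈ Icc (max 2 ⌈(p : ℝ) - 2 * √p⌉₊) ⌊(p : ℝ) + 2 * √p⌋₊ := by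
  rw [abs_le] at h
  exact mem_Icc.2 ⟨max_le hq (Nat.ceil_le.2 (by linarith)), Nat.le_floor (by linarith)⟩

noncomputable def sqrtWindowSum (p : ℕ) : ℝ :=
  ∑ n ∈ Icc (max 2 ⌈(p : ℝ) - 2 * √p⌉₊) ⌊(p : ℝ) + 2 * √p⌋₊, vonMangoldtTotientWeight n

noncomputable def sqrtBlock (x : ℝ) (q : ℕ) : ℕ := ⌊(q : ℝ) / √x⌋₊

theorem card_fiber_div_two_le_sqrtWindowSum {x : ℝ} (hx : 0 < x) {p : ℕ}
    (hp : p ∈ dyadicPrimes x) :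
    (#{q ∈ dyadicPrimes x | sqrtBlock x q = sqrtBlock x p} : ℝ) / 2 ≤ sqrtWindowSum p := by
  have hpx := ((mem_dyadicPrimes hx.le).1 hp).2.1
  refine card_div_two_le_sum_vonMangoldtTotientWeight
    (fun q hq => ((mem_dyadicPrimes hx.le).1 (mem_filter.1 hq).1).1) fun q hq => ?_
  obtain ⟨hqT, hblock⟩ := mem_filter.1 hq
  obtain ⟨hq, hqx, -⟩ := (mem_dyadicPrimes hx.le).1 hqT
  refine mem_Icc_of_abs_sub_le_two_mul_sqrt hq.two_le ?_
  have hclose := abs_sub_lt_of_floor_div_eq (Real.sqrt_pos.2 hx) (by linarith) (by linarith) hblock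
  have hsqrt : √x ≤ √p := Real.sqrt_le_sqrt hpx
  linarith [Real.sqrt_nonneg p]

theorem sq_card_dyadicPrimes_div_le {x : ℝ} (hx : 4 ≤ x) :
    (#(dyadicPrimes x) : ℝ) ^ 2 / (32 * x) ≤
      ∑ p ∈ dyadicPrimes x, 1 / (4 * √p) * sqrtWindowSum p := by
  have hx0 : 0 < x := by linarith
  have hsx : 2 ≤ √x := Real.le_sqrt_of_sq_le (by linarith)
  have hsx0 : 0 < √x := by linarith
  let fiber (p : ℕ) : ℝ := #{q ∈ dyadicPrimes x | sqrtBlock x q = sqrtBlock x p}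
  have hCS : (#(dyadicPrimes x) : ℝ) ^ 2 ≤
      #((dyadicPrimes x).image (sqrtBlock x)) * ∑ p ∈ dyadicPrimes x, fiber p := by
    have h := (Nat.cast_le (α := ℝ)).2
      (sq_card_le_card_image_mul_sum_card_fiber (dyadicPrimes x) (sqrtBlock x))
    push_cast at h
    exact h
  have hblocks : (#((dyadicPrimes x).image (sqrtBlock x)) : ℝ) ≤ 2 * √x := by
    have := card_image_floor_div_le (s := dyadicPrimes x) (Real.sqrt_pos.2 hx0) hx0.le
      (by linarith) fun p hp => ((mem_dyadicPrimes hx0.le).1 hp).2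
    rw [show (2 * x - x) / √x = √x by
      rw [two_mul, add_sub_cancel_right, Real.div_sqrt]] at this
    exact this.trans (by linarith)
  have hterm : ∀ p ∈ dyadicPrimes x, fiber p / (16 * √x) ≤ 1 / (4 * √p) * sqrtWindowSum p := by
    intro p hp
    have hp2x := ((mem_dyadicPrimes hx0.le).1 hp).2.2
    have hsp : √p ≤ 2 * √x := by
      rw [Real.sqrt_le_iff, mul_pow, Real.sq_sqrt hx0.le]
      exact ⟨by positivity, by linarith⟩
    have hsp0 : 0 < √p := Real.sqrt_pos.2 (by linarith [((mem_dyadicPrimes hx0.le).1 hp).2.1])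
    calc fiber p / (16 * √x) = 1 / (8 * √x) * (fiber p / 2) := by ring
      _ ≤ 1 / (4 * √p) * sqrtWindowSum p :=
          mul_le_mul (one_div_le_one_div_of_le (by positivity) (by linarith))
            (card_fiber_div_two_le_sqrtWindowSum hx0 hp) (by positivity) (by positivity)
  have hF : 0 ≤ ∑ p ∈ dyadicPrimes x, fiber p := sum_nonneg fun _ _ => Nat.cast_nonneg _
  calc (#(dyadicPrimes x) : ℝ) ^ 2 / (32 * x)
      ≤ #((dyadicPrimes x).image (sqrtBlock x)) * (∑ p ∈ dyadicPrimes x, fiber p) / (32 * x) :=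
        div_le_div_of_nonneg_right hCS (by positivity)
    _ ≤ 2 * √x * (∑ p ∈ dyadicPrimes x, fiber p) / (32 * x) :=
        div_le_div_of_nonneg_right (mul_le_mul_of_nonneg_right hblocks hF) (by positivity)
    _ = (∑ p ∈ dyadicPrimes x, fiber p) / (16 * √x) := by
        rw [div_eq_div_iff (by positivity) (by positivity)]
        linear_combination 32 * (∑ p ∈ dyadicPrimes x, fiber p) * Real.mul_self_sqrt hx0.le
    _ = ∑ p ∈ dyadicPrimes x, fiber p / (16 * √x) := sum_div _ _ _
    _ ≤ _ := sum_le_sum hterm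

/-- There exist `c > 0` and `x₀` such that for all `x ≥ x₀`:
`Σ_{p prime, x ≤ p ≤ 2x} (1/(4√p)) · Σ_{n ≥ 2, p−2√p ≤ n ≤ p+2√p} (Λ(n)/log n)·(φ(n)/n)
  ≥ c·x/(log x)²`. -/
theorem main_term_lower_bound :
    ∃ c : ℝ, 0 < c ∧ ∃ x₀ : ℝ, ∀ x : ℝ, x₀ ≤ x →
      ∑ p ∈ (Finset.Icc ⌈x⌉₊ ⌊2 * x⌋₊).filter Nat.Prime,
        (1 / (4 * Real.sqrt p)) *
          ∑ n ∈ Finset.Icc (max 2 ⌈(p : ℝ) - 2 * Real.sqrt p⌉₊) ⌊(p : ℝ) + 2 * Real.sqrt p⌋₊,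
            (Λ n / Real.log n) * ((Nat.totient n : ℝ) / n) ≥
      c * x / (Real.log x) ^ 2 := by
  obtain ⟨x₀, hx₀⟩ := eventually_atTop.1
    (eventually_div_nine_log_le_card_dyadicPrimes.and (eventually_ge_atTop 4))
  refine ⟨1 / 2592, by norm_num, x₀, fun x hx => ?_⟩
  obtain ⟨hcard, hx4⟩ := hx₀ x hx
  have hL : 0 < Real.log x := Real.log_pos (by linarith)
  calc 1 / 2592 * x / Real.log x ^ 2 = (x / (9 * Real.log x)) ^ 2 / (32 * x) := by
        field_simp
        ring
    _ ≤ (#(dyadicPrimes x) : ℝ) ^ 2 / (32 * x) := by gcongr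
    _ ≤ _ := sq_card_dyadicPrimes_div_le hx4
end

section
/- There exists a real number x₀ such that for all real x ≥ x₀, π(2x) − π(x) > x/(2·log x), where π(y) denotes the number of primes ≤ y. -/
/-!
Chebyshev's method. By Legendre, `log ⌊x⌋! = ∑_{n ≤ x} Λ(n) ⌊x/n⌋`, so the combination
`S(x) = T(x) - T(x/2) - T(x/3) - T(x/5) + T(x/30)` of `T(x) = log ⌊x⌋!` equals
`∑_{n ≤ x} Λ(n) w(⌊x/n⌋)` for a weight `w` with values in `{0, 1}` that equals `1` on `[1, 6)`.
Hence `ψ(x) - ψ(x/6) ≤ S(x) ≤ ψ(x)`, while Stirling's formula gives `S(x) = A x + o(x)` with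
`A = log 2 / 2 + log 3 / 3 + log 5 / 5 - log 30 / 30 ≈ 0.921`. Bounding `ψ(x/6)` by
`θ(x/6) ≤ x log 4 / 6` and using `ψ - θ = O(√x)` gives
`θ(2x) - θ(x) ≥ (A - log 4 / 6 - ε) x ≈ 0.69 x`. Every prime in `(x, 2x]` contributes at most
`log 2x` to this difference, so `π(2x) - π(x) ≥ 0.69 x / log 2x`, and `0.69 > 1/2`.
-/

open Real Filter Asymptotics Finset
open scoped Nat ArithmeticFunction.vonMangoldt Chebyshev Nat.Prime

theorem Real.isLittleO_sqrt_id_atTop : (fun x : ℝ => √x) =o[atTop] id := by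
  refine (isLittleO_iff_tendsto' ?_).2 ?_
  · filter_upwards [eventually_gt_atTop 0] with x hx h
    exact absurd h hx.ne'
  · refine (tendsto_inv_atTop_zero.comp tendsto_sqrt_atTop).congr' ?_
    filter_upwards [eventually_gt_atTop 0] with x hx
    simp [sqrt_div_self']

theorem Asymptotics.IsLittleO.eventually_abs_le_mul {f : ℝ → ℝ} (h : f =o[atTop] id)
    {ε : ℝ} (hε : 0 < ε) : ∀ᶠ x in atTop, |f x| ≤ ε * x := by
  filter_upwards [h.bound hε, eventually_ge_atTop 0] with x hx hx₀
  simpa [abs_of_nonneg hx₀] using hx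

theorem Real.abs_floor_mul_log_sub_mul_log_le {x : ℝ} (hx : 1 ≤ x) :
    |(⌊x⌋₊ * log ⌊x⌋₊ - ⌊x⌋₊) - (x * log x - x)| ≤ log x + 1 := by
  set n : ℝ := (⌊x⌋₊ : ℝ)
  have hn₁ : 1 ≤ n := by simpa [n] using Nat.one_le_floor_iff x |>.mpr hx
  have hnx : n ≤ x := Nat.floor_le (by linarith)
  have hxn : x - n < 1 := by linarith [Nat.lt_floor_add_one x]
  have hlog_mono : 0 ≤ log x - log n := by linarith [log_le_log (by linarith) hnx]
  have hlog_le : n * (log x - log n) ≤ x - n := by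
    have := log_le_sub_one_of_pos (show 0 < x / n by positivity)
    rw [log_div (by positivity) (by positivity)] at this
    calc n * (log x - log n) ≤ n * (x / n - 1) := by gcongr
      _ = x - n := by field_simp
  have hlogx : 0 ≤ log x := log_nonneg hx
  have key : x * log x - x - (n * log n - n)
      = (x - n) * log x + n * (log x - log n) - (x - n) := by ring
  rw [abs_sub_comm, abs_le, key]
  constructor <;> nlinarith

namespace Stirling

theorem log_factorial_le (n : ℕ) : log n ! ≤ n * log n - n + log n / 2 + 1 := by
  rcases Nat.eq_zero_or_pos n with rfl | hn
  · simp
  obtain ⟨m, rfl⟩ := Nat.exists_eq_add_of_le' hn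
  have hseq := log_le_log (stirlingSeq'_pos m) (stirlingSeq'_antitone (Nat.zero_le m))
  have hone : log (stirlingSeq 1) = 1 - log 2 / 2 := by
    rw [stirlingSeq_one, log_div (by positivity) (by positivity), log_exp, log_sqrt (by norm_num)]
  simp only [Function.comp_apply, Nat.succ_eq_add_one, zero_add] at hseq
  rw [hone, log_stirlingSeq_formula, log_mul (by norm_num) (by positivity),
    log_div (by positivity) (by positivity), log_exp] at hseq
  linarith

theorem abs_log_factorial_sub_le {n : ℕ} (hn : n ≠ 0) :
    |log n ! - (n * log n - n)| ≤ log n + 1 := by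
  have hlower := le_log_factorial_stirling hn
  have hupper := log_factorial_le n
  have h2π : 0 ≤ log (2 * Real.pi) := log_nonneg (by linarith [pi_gt_three])
  have hlog : 0 ≤ log n := log_natCast_nonneg n
  rw [abs_le]
  constructor <;> linarith

theorem log_factorial_floor_sub_isLittleO :
    (fun x : ℝ => log ⌊x⌋₊ ! - (x * log x - x)) =o[atTop] id := by
  have hbound : (fun x : ℝ => log ⌊x⌋₊ ! - (x * log x - x)) =O[atTop]
      fun x => 2 * log x + 2 := by
    refine IsBigO.of_bound 1 ?_
    filter_upwards [eventually_ge_atTop 1] with x hx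
    have hfact := abs_log_factorial_sub_le (Nat.floor_pos.2 hx).ne'
    have hfloor := abs_floor_mul_log_sub_mul_log_le hx
    have hlog : log ⌊x⌋₊ ≤ log x :=
      log_le_log (mod_cast Nat.floor_pos.2 hx) (Nat.floor_le (by linarith))
    have hlogx : 0 ≤ log x := log_nonneg hx
    rw [norm_eq_abs, norm_eq_abs, abs_of_nonneg (a := 2 * log x + 2) (by linarith), one_mul]
    calc _ ≤ |log ⌊x⌋₊ ! - (⌊x⌋₊ * log ⌊x⌋₊ - ⌊x⌋₊)|
          + |(⌊x⌋₊ * log ⌊x⌋₊ - ⌊x⌋₊) - (x * log x - x)| := abs_sub_le _ _ _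
      _ ≤ _ := by linarith
  exact hbound.trans_isLittleO
    ((isLittleO_log_id_atTop.const_mul_left 2).add (isLittleO_const_id_atTop 2))

end Stirling

namespace Chebyshev

theorem log_factorial_eq_sum_log (N : ℕ) : log (N ! : ℝ) = ∑ n ∈ Ioc 0 N, log n := by
  rw [← Finset.prod_Ico_id_eq_factorial,
    show Ico 1 (N + 1) = Ioc 0 N from Finset.Ico_add_one_add_one_eq_Ioc 0 N, Nat.cast_prod,
    log_prod]
  intro n hn
  exact Nat.cast_ne_zero.mpr (mem_Ioc.mp hn).1.ne'

theorem log_factorial_eq_sum_vonMangoldt {N M : ℕ} (h : N ≤ M) :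
    log (N ! : ℝ) = ∑ n ∈ Ioc 0 M, Λ n * (N / n : ℕ) := by
  have hζ := ArithmeticFunction.sum_Ioc_mul_zeta_eq_sum Λ N
  simp only [ArithmeticFunction.vonMangoldt_mul_zeta, ArithmeticFunction.log_apply] at hζ
  rw [log_factorial_eq_sum_log, hζ]
  refine sum_subset (Ioc_subset_Ioc_right h) fun n hn hnN => ?_
  simp [Nat.div_eq_of_lt (by simp_all : N < n)]

def chebyshevWeight (m : ℕ) : ℤ := m - (m / 2 : ℕ) - (m / 3 : ℕ) - (m / 5 : ℕ) + (m / 30 : ℕ)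

theorem chebyshevWeight_nonneg (m : ℕ) : 0 ≤ chebyshevWeight m := by
  unfold chebyshevWeight; omega

theorem chebyshevWeight_le_one (m : ℕ) : chebyshevWeight m ≤ 1 := by
  unfold chebyshevWeight; omega

theorem chebyshevWeight_eq_one {m : ℕ} (h₀ : 0 < m) (h₆ : m < 6) : chebyshevWeight m = 1 := by
  unfold chebyshevWeight; omega

noncomputable def chebyshevSum (x : ℝ) : ℝ :=
  log ⌊x⌋₊ ! - log ⌊x / 2⌋₊ ! - log ⌊x / 3⌋₊ ! - log ⌊x / 5⌋₊ ! + log ⌊x / 30⌋₊ !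

theorem chebyshevSum_eq_sum_vonMangoldt_mul_weight (x : ℝ) :
    chebyshevSum x = ∑ n ∈ Ioc 0 ⌊x⌋₊, Λ n * chebyshevWeight (⌊x⌋₊ / n) := by
  have hlog (k : ℕ) : log ⌊x / k⌋₊ ! = ∑ n ∈ Ioc 0 ⌊x⌋₊, Λ n * (⌊x⌋₊ / n / k : ℕ) := by
    rw [Nat.floor_div_natCast, log_factorial_eq_sum_vonMangoldt (Nat.div_le_self _ _)]
    simp only [Nat.div_div_eq_div_mul, Nat.mul_comm]
  have h₂ := hlog 2
  have h₃ := hlog 3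
  have h₅ := hlog 5
  have h₃₀ := hlog 30
  push_cast at h₂ h₃ h₅ h₃₀
  rw [chebyshevSum, log_factorial_eq_sum_vonMangoldt le_rfl, h₂, h₃, h₅, h₃₀,
    ← sum_sub_distrib, ← sum_sub_distrib, ← sum_sub_distrib, ← sum_add_distrib]
  refine sum_congr rfl fun n _ => ?_
  simp only [chebyshevWeight, Int.cast_add, Int.cast_sub, Int.cast_natCast]
  ring

theorem chebyshevSum_le_psi (x : ℝ) : chebyshevSum x ≤ ψ x := by
  rw [chebyshevSum_eq_sum_vonMangoldt_mul_weight, psi]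
  refine sum_le_sum fun n _ => mul_le_of_le_one_right ArithmeticFunction.vonMangoldt_nonneg ?_
  exact_mod_cast chebyshevWeight_le_one _

theorem psi_sub_psi_div_six_le_chebyshevSum (x : ℝ) : ψ x - ψ (x / 6) ≤ chebyshevSum x := by
  have hfloor : ⌊x / 6⌋₊ = ⌊x⌋₊ / 6 := by exact_mod_cast Nat.floor_div_natCast x 6
  have hsplit {f : ℕ → ℝ} : ∑ n ∈ Ioc 0 ⌊x⌋₊, f n =
      ∑ n ∈ Ioc 0 (⌊x⌋₊ / 6), f n + ∑ n ∈ Ioc (⌊x⌋₊ / 6) ⌊x⌋₊, f n :=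
    (sum_Ioc_consecutive f (Nat.zero_le _) (Nat.div_le_self _ _)).symm
  rw [chebyshevSum_eq_sum_vonMangoldt_mul_weight, psi, psi, hfloor, hsplit, hsplit,
    add_sub_cancel_left]
  refine le_add_of_nonneg_of_le ?_ ?_
  · exact sum_nonneg fun n _ => mul_nonneg ArithmeticFunction.vonMangoldt_nonneg
      (mod_cast chebyshevWeight_nonneg _)
  · refine sum_le_sum fun n hn => ?_
    obtain ⟨hlo, hhi⟩ := mem_Ioc.mp hn
    rw [chebyshevWeight_eq_one, Int.cast_one, mul_one]
    · exact Nat.div_pos hhi (by omega)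
    · exact Nat.div_lt_of_lt_mul (by omega)

/-- The terms `x log x - x` of Stirling's formula cancel in `chebyshevSum x` because
`1 - 1/2 - 1/3 - 1/5 + 1/30 = 0`; this constant is what remains of the `log k` in `log (x / k)`. -/
noncomputable def chebyshevConst : ℝ := log 2 / 2 + log 3 / 3 + log 5 / 5 - log 30 / 30

theorem chebyshevSum_sub_mul_isLittleO :
    (fun x => chebyshevSum x - chebyshevConst * x) =o[atTop] id := by
  set E := fun y : ℝ => log ⌊y⌋₊ ! - (y * log y - y)
  have hE : E =o[atTop] id := Stirling.log_factorial_floor_sub_isLittleO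
  have hE_div (k : ℝ) (hk : 0 < k) : (fun x => E (x / k)) =o[atTop] id :=
    (hE.comp_tendsto (tendsto_id.atTop_div_const hk)).trans_isBigO
      ((isBigO_refl id atTop).const_mul_left k⁻¹ |>.congr_left fun x => by simp [div_eq_inv_mul])
  have hsum : (fun x => E x - E (x / 2) - E (x / 3) - E (x / 5) + E (x / 30)) =ᶠ[atTop]
      fun x => chebyshevSum x - chebyshevConst * x := by
    filter_upwards [eventually_gt_atTop 0] with x hx
    simp only [E, chebyshevSum, chebyshevConst]
    rw [log_div hx.ne' (by norm_num), log_div hx.ne' (by norm_num),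
      log_div hx.ne' (by norm_num), log_div hx.ne' (by norm_num)]
    ring
  exact ((((hE.sub (hE_div 2 two_pos)).sub (hE_div 3 three_pos)).sub
    (hE_div 5 (by norm_num))).add (hE_div 30 (by norm_num))).congr' hsum EventuallyEq.rfl

theorem psi_sub_theta_isLittleO : (fun x => ψ x - θ x) =o[atTop] id :=
  isBigO_psi_sub_theta_sqrt.trans_isLittleO isLittleO_sqrt_id_atTop

theorem eventually_mul_le_psi {c : ℝ} (hc : c < chebyshevConst) :
    ∀ᶠ x in atTop, c * x ≤ ψ x := by
  obtain ⟨ε, hε, rfl⟩ : ∃ ε > 0, c = chebyshevConst - ε :=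
    ⟨chebyshevConst - c, by linarith, by ring⟩
  filter_upwards [chebyshevSum_sub_mul_isLittleO.eventually_abs_le_mul hε] with x hx
  linarith [chebyshevSum_le_psi x, (abs_le.1 hx).1]

theorem eventually_psi_le_mul {c : ℝ} (hc : chebyshevConst + log 4 / 6 < c) :
    ∀ᶠ x in atTop, ψ x ≤ c * x := by
  obtain ⟨ε, hε, rfl⟩ : ∃ ε > 0, c = chebyshevConst + log 4 / 6 + 2 * ε :=
    ⟨(c - (chebyshevConst + log 4 / 6)) / 2, by linarith, by ring⟩
  filter_upwards [chebyshevSum_sub_mul_isLittleO.eventually_abs_le_mul hε,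
    (tendsto_id.atTop_div_const (by norm_num : (0 : ℝ) < 6)).eventually
      (psi_sub_theta_isLittleO.eventually_abs_le_mul hε),
    eventually_ge_atTop 0] with x hS hψθ hx
  have hθ := theta_le_log4_mul_x (x := x / 6) (by positivity)
  simp only [id] at hψθ
  linarith [psi_sub_psi_div_six_le_chebyshevSum x, (abs_le.1 hS).2, (abs_le.1 hψθ).2,
    mul_nonneg hε.le hx]

theorem eventually_mul_le_theta_two_mul_sub_theta {c : ℝ} (hc : c < chebyshevConst - log 4 / 6) :
    ∀ᶠ x in atTop, c * x ≤ θ (2 * x) - θ x := by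
  obtain ⟨ε, hε, rfl⟩ : ∃ ε > 0, c = chebyshevConst - log 4 / 6 - 5 * ε :=
    ⟨(chebyshevConst - log 4 / 6 - c) / 5, by linarith, by ring⟩
  have h₂ : Tendsto (fun x : ℝ => 2 * x) atTop atTop := tendsto_id.const_mul_atTop two_pos
  filter_upwards [h₂.eventually (eventually_mul_le_psi (c := chebyshevConst - ε) (by linarith)),
    h₂.eventually (psi_sub_theta_isLittleO.eventually_abs_le_mul hε),
    eventually_psi_le_mul (c := chebyshevConst + log 4 / 6 + ε) (by linarith)]
    with x hψ₂ hψθ hψ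
  linarith [theta_le_psi x, (abs_le.1 hψθ).2]

theorem theta_sub_theta_le_mul_log {x y : ℝ} (hxy : x ≤ y) :
    θ y - θ x ≤ ((π ⌊y⌋₊ : ℝ) - π ⌊x⌋₊) * log y := by
  have hsub : Nat.primesLE ⌊x⌋₊ ⊆ Nat.primesLE ⌊y⌋₊ := Nat.primesLE_mono (Nat.floor_mono hxy)
  rw [theta_eq_sum_primesLE, theta_eq_sum_primesLE, ← sum_sdiff hsub, add_sub_cancel_right,
    ← Nat.primesLE_card_eq_primeCounting, ← Nat.primesLE_card_eq_primeCounting,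
    ← Nat.cast_sub (card_le_card hsub), ← card_sdiff_of_subset hsub, ← nsmul_eq_mul]
  refine sum_le_card_nsmul _ _ _ fun p hp => ?_
  have hp := (mem_sdiff.1 hp).1
  have hp_prime := Nat.prime_of_mem_primesLE hp
  exact log_le_log (mod_cast hp_prime.pos)
    ((Nat.le_floor_iff' hp_prime.ne_zero).1 (Nat.le_of_mem_primesLE hp))

theorem half_lt_chebyshevConst_sub : 1 / 2 < chebyshevConst - log 4 / 6 := by
  have h₃ : log 2 < log 3 := log_lt_log two_pos (by norm_num)
  have h₅ : log 4 < log 5 := log_lt_log (by norm_num) (by norm_num)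
  have h₄ : log 4 = 2 * log 2 := by
    rw [show (4 : ℝ) = 2 ^ 2 by norm_num, log_pow]; norm_num
  have h₃₀ : log 30 = log 2 + log 3 + log 5 := by
    rw [show (30 : ℝ) = 2 * 3 * 5 by norm_num, log_mul (by norm_num) (by norm_num),
      log_mul (by norm_num) (by norm_num)]
  rw [chebyshevConst, h₃₀, h₄]
  linarith [log_two_gt_d9]

theorem eventually_div_two_mul_log_lt {c : ℝ} (hc : 1 / 2 < c) :
    ∀ᶠ x in atTop, x / (2 * log x) < c * x / log (2 * x) := by
  filter_upwards [eventually_gt_atTop 1,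
    tendsto_log_atTop.eventually_gt_atTop (log 2 / (2 * c - 1))] with x hx hlog
  have hlogx : 0 < log x := log_pos hx
  have hlog₂ : log (2 * x) = log 2 + log x := log_mul two_ne_zero (by positivity)
  rw [div_lt_div_iff₀ (by positivity) (by rw [hlog₂]; positivity), hlog₂]
  rw [div_lt_iff₀ (by linarith)] at hlog
  nlinarith

theorem eventually_mul_div_log_le_primeCounting_sub {c : ℝ}
    (hc : c < chebyshevConst - log 4 / 6) :
    ∀ᶠ x in atTop, c * x / log (2 * x) ≤ (π ⌊2 * x⌋₊ : ℝ) - π ⌊x⌋₊ := by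
  filter_upwards [eventually_mul_le_theta_two_mul_sub_theta hc, eventually_gt_atTop 1]
    with x hθ hx
  rw [div_le_iff₀ (log_pos (by linarith))]
  exact hθ.trans (theta_sub_theta_le_mul_log (by linarith))

end Chebyshev

/-- There exists a real number `x₀` such that for all real `x ≥ x₀`,
`π(2x) − π(x) > x/(2·log x)`, where `π(y)` denotes the number of primes `≤ y`. -/
theorem primes_in_dyadic_interval :
    ∃ x₀ : ℝ, ∀ x : ℝ, x₀ ≤ x →
      (Nat.primeCounting ⌊2 * x⌋₊ : ℝ) - (Nat.primeCounting ⌊x⌋₊ : ℝ) >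
        x / (2 * Real.log x) := by
  obtain ⟨c, hc_half, hc⟩ := exists_between Chebyshev.half_lt_chebyshevConst_sub
  refine eventually_atTop.1 ?_
  filter_upwards [Chebyshev.eventually_div_two_mul_log_lt hc_half,
    Chebyshev.eventually_mul_div_log_le_primeCounting_sub hc] with x h₁ h₂
  exact h₁.trans_le h₂
end
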